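/- Every vector v in ℋ ∩ 𝒦 (i.e. satisfying 𝟙ᵀ Z v = 0 and 𝟙ᵀ A v = 0) satisfies S v = S_LR v, where S = A M_γ⁻¹ A + (1/β) Z𝟙 M_s 𝟙ᵀZ and S_LR = (A + (1/√β) Z𝟙 M_s 𝟙ᵀZ) M_γ⁻¹ (A + (1/√β) Z𝟙 M_s 𝟙ᵀZ). Hence 1 is an eigenvalue of S_LR⁻¹S with geometric multiplicity at least (N−2)n. -/

import Mathlib

/-!
On `ℋ ∩ 𝒦` the rank-`n` term `L = Z𝟙 M_s 𝟙ᵀZ` annihilates `v`, and the identity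
`L M_γ⁻¹ = Z𝟙𝟙ᵀ` turns the cross term `L M_γ⁻¹ A v` into `Z𝟙 (𝟙ᵀA v) = 0`; hence
`S v = A M_γ⁻¹ A v = S_LR v`. The identity holds because `𝟙ᵀM = M_s 𝟙ᵀ` and `𝟙ᵀZ` is a left
fixed vector of the weighting `W = (1 + γ)Z − γZ𝟙𝟙ᵀZ` in `M_γ = M W` (as `𝟙ᵀZ𝟙 = ∑ ζᵢ = 1`).
Since `A + β^{-1/2} L` is positive definite, `S_LR` is invertible, so `ℋ ∩ 𝒦`, cut out by
`2n` linear equations, lies in the kernel of `S_LR⁻¹ S − 1`.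
-/

open Matrix
open scoped Kronecker

theorem LinearMap.finrank_sub_le_finrank_ker_inf_ker {K V W₁ W₂ : Type*} [DivisionRing K]
    [AddCommGroup V] [Module K V] [AddCommGroup W₁] [Module K W₁] [AddCommGroup W₂] [Module K W₂]
    [FiniteDimensional K V] [FiniteDimensional K W₁] [FiniteDimensional K W₂]
    (f : V →ₗ[K] W₁) (g : V →ₗ[K] W₂) :
    Module.finrank K V - (Module.finrank K W₁ + Module.finrank K W₂) ≤
      Module.finrank K (LinearMap.ker f ⊓ LinearMap.ker g : Submodule K V) := by
  rw [← LinearMap.ker_prod, ← Module.finrank_prod, ← (f.prod g).finrank_range_add_finrank_ker]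
  have := Submodule.finrank_le (LinearMap.range (f.prod g))
  omega

namespace Matrix

theorem posDef_blockDiagonal {m o R : Type*} [Fintype m] [Fintype o] [DecidableEq o]
    [CommRing R] [PartialOrder R] [StarRing R] [IsOrderedCancelAddMonoid R]
    {B : o → Matrix m m R} (hB : ∀ k, (B k).PosDef) : (blockDiagonal B).PosDef := by
  have hquad : ∀ x : m × o → R, star x ⬝ᵥ (blockDiagonal B *ᵥ x) =
      ∑ k, star (fun i => x (i, k)) ⬝ᵥ (B k *ᵥ fun i => x (i, k)) := by
    intro x
    simp [dotProduct, mulVec, blockDiagonal_apply, Fintype.sum_prod_type_right, ite_mul,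
      Finset.sum_ite_irrel]
  refine posDef_iff_dotProduct_mulVec.mpr
    ⟨isHermitian_blockDiagonal_iff.mpr fun k => (hB k).isHermitian, fun x hx => ?_⟩
  obtain ⟨⟨i, k⟩, hxik⟩ := Function.ne_iff.mp hx
  rw [hquad]
  exact Finset.sum_pos' (fun k _ => (hB k).posSemidef.dotProduct_mulVec_nonneg _)
    ⟨k, Finset.mem_univ _, (hB k).dotProduct_mulVec_pos fun h => hxik (congrFun h i)⟩

theorem card_sub_le_finrank_ker_inv_mul_sub_one {ι κ₁ κ₂ K : Type*} [Fintype ι] [DecidableEq ι]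
    [Fintype κ₁] [Fintype κ₂] [Field K] {S T : Matrix ι ι K} (F : Matrix κ₁ ι K)
    (G : Matrix κ₂ ι K) (hT : IsUnit T.det)
    (h : ∀ v, F *ᵥ v = 0 → G *ᵥ v = 0 → S *ᵥ v = T *ᵥ v) :
    Fintype.card ι - (Fintype.card κ₁ + Fintype.card κ₂) ≤
      Module.finrank K (LinearMap.ker (T⁻¹ * S - 1).mulVecLin) := by
  have hker : LinearMap.ker F.mulVecLin ⊓ LinearMap.ker G.mulVecLin ≤
      LinearMap.ker (T⁻¹ * S - 1).mulVecLin := fun v hv => by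
    rw [LinearMap.mem_ker, mulVecLin_apply, sub_mulVec, ← mulVec_mulVec, h v hv.1 hv.2,
      mulVec_mulVec, nonsing_inv_mul T hT, sub_self]
  simpa using (LinearMap.finrank_sub_le_finrank_ker_inf_ker F.mulVecLin G.mulVecLin).trans
    (Submodule.finrank_mono hker)

section CommRing

variable {ι κ R : Type*} [Fintype ι] [Fintype κ] [CommRing R] {Z : Matrix ι ι R}
  {E : Matrix ι κ R}

theorem transpose_mul_weight [DecidableEq κ] (hE : Eᵀ * Z * E = 1) (γ : R) :
    Eᵀ * ((1 + γ) • Z - γ • (Z * (E * Eᵀ) * Z)) = Eᵀ * Z := by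
  have hEZE : Eᵀ * (Z * (E * Eᵀ) * Z) = Eᵀ * Z := by
    simp only [← Matrix.mul_assoc, hE, Matrix.one_mul]
  rw [Matrix.mul_sub, Matrix.mul_smul, Matrix.mul_smul, hEZE, add_smul, one_smul,
    add_sub_cancel_right]

theorem lowRank_mul_inv [DecidableEq ι] {M W : Matrix ι ι R} {Ms : Matrix κ κ R}
    (hM : IsUnit M.det) (hW : IsUnit W.det) (hEM : Eᵀ * M = Ms * Eᵀ) (hEW : Eᵀ * W = Eᵀ * Z) :
    Z * E * Ms * Eᵀ * Z * (M * W)⁻¹ = Z * (E * Eᵀ) := by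
  have hEZW : Eᵀ * Z * W⁻¹ = Eᵀ := by
    rw [← hEW, Matrix.mul_assoc, mul_nonsing_inv W hW, Matrix.mul_one]
  have hMsEM : Ms * Eᵀ * M⁻¹ = Eᵀ := by
    rw [← hEM, Matrix.mul_assoc, mul_nonsing_inv M hM, Matrix.mul_one]
  calc Z * E * Ms * Eᵀ * Z * (M * W)⁻¹ = Z * E * (Ms * (Eᵀ * Z * W⁻¹) * M⁻¹) := by
        simp only [mul_inv_rev, Matrix.mul_assoc]
    _ = Z * (E * Eᵀ) := by rw [hEZW, hMsEM, Matrix.mul_assoc]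

theorem add_smul_mul_mul_add_smul_mulVec {A P : Matrix ι ι R} {Ms : Matrix κ κ R}
    (hLP : Z * E * Ms * Eᵀ * Z * P = Z * (E * Eᵀ)) (c d : R) {v : ι → R}
    (hZv : (Eᵀ * Z) *ᵥ v = 0) (hAv : (Eᵀ * A) *ᵥ v = 0) :
    ((A + c • (Z * E * Ms * Eᵀ * Z)) * P * (A + c • (Z * E * Ms * Eᵀ * Z))) *ᵥ v =
      (A * P * A + d • (Z * E * Ms * Eᵀ * Z)) *ᵥ v := by
  have hLv : (Z * E * Ms * Eᵀ * Z) *ᵥ v = 0 := by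
    rw [show Z * E * Ms * Eᵀ * Z = Z * E * Ms * (Eᵀ * Z) by simp only [Matrix.mul_assoc],
      ← mulVec_mulVec, hZv, mulVec_zero]
  have hLPA : (Z * E * Ms * Eᵀ * Z * P * A) *ᵥ v = 0 := by
    rw [hLP, Matrix.mul_assoc, Matrix.mul_assoc, ← mulVec_mulVec, ← mulVec_mulVec, hAv,
      mulVec_zero, mulVec_zero]
  rw [← mulVec_mulVec, add_mulVec A, smul_mulVec, hLv, smul_zero, add_zero, mulVec_mulVec,
    Matrix.add_mul, Matrix.add_mul, add_mulVec, smul_mul, smul_mul, smul_mulVec, hLPA,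
    add_mulVec, smul_mulVec, hLv]
  simp

end CommRing

section Field

variable {ι κ R : Type*} [Fintype ι] [DecidableEq ι] [Fintype κ] [DecidableEq κ] [Field R]
  {Z : Matrix ι ι R} {E : Matrix ι κ R}

theorem weight_mul_inv (hZ : IsUnit Z.det) (hE : Eᵀ * Z * E = 1) {γ : R} (hγ : 1 + γ ≠ 0) :
    ((1 + γ) • Z - γ • (Z * (E * Eᵀ) * Z)) * ((1 + γ)⁻¹ • Z⁻¹ + (γ / (1 + γ)) • (E * Eᵀ)) =
      1 := by
  have hEZE : ∀ X : Matrix κ ι R, Eᵀ * (Z * (E * X)) = X := fun X => by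
    rw [← Matrix.mul_assoc, ← Matrix.mul_assoc, hE, Matrix.one_mul]
  simp only [Matrix.mul_assoc, Matrix.sub_mul, Matrix.mul_add, Matrix.mul_smul, Matrix.smul_mul,
    mul_nonsing_inv Z hZ, hEZE, Matrix.mul_one]
  match_scalars <;> field_simp; ring

theorem isUnit_det_weight (hZ : IsUnit Z.det) (hE : Eᵀ * Z * E = 1) {γ : R} (hγ : 1 + γ ≠ 0) :
    IsUnit ((1 + γ) • Z - γ • (Z * (E * Eᵀ) * Z)).det :=
  isUnit_det_of_right_inverse (weight_mul_inv hZ hE hγ)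

end Field

/-- `𝟙 ⊗ I`, written `𝟙` in the paper. -/
def stackedOne (ι κ R : Type*) [DecidableEq κ] [Zero R] [One R] : Matrix (ι × κ) κ R :=
  of fun p b => if p.2 = b then 1 else 0

section Blocks

variable {ι κ R : Type*} [Fintype ι] [DecidableEq ι] [Fintype κ]

theorem transpose_stackedOne_mul_diagonal_mul_stackedOne [DecidableEq κ] [CommRing R]
    {ζ : ι → R} (hζ : ∑ i, ζ i = 1) :
    (stackedOne ι κ R)ᵀ * diagonal (fun p : ι × κ => ζ p.1) * stackedOne ι κ R = 1 := by
  ext a b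
  simp [stackedOne, mul_apply, diagonal_apply, one_apply, Fintype.sum_prod_type, hζ, eq_comm]

theorem transpose_stackedOne_mul_blocks [DecidableEq κ] [CommRing R] (Ms : Matrix κ κ R) :
    (stackedOne ι κ R)ᵀ * (of fun p q : ι × κ => if p.1 = q.1 then Ms p.2 q.2 else 0) =
      Ms * (stackedOne ι κ R)ᵀ := by
  ext a ⟨j, b⟩
  simp [stackedOne, mul_apply, Fintype.sum_prod_type]

theorem isUnit_det_blocks [DecidableEq κ] [CommRing R] {Ms : Matrix κ κ R}
    (hMs : IsUnit Ms.det) :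
    IsUnit (of fun p q : ι × κ => if p.1 = q.1 then Ms p.2 q.2 else 0).det := by
  have hkron : (of fun p q : ι × κ => if p.1 = q.1 then Ms p.2 q.2 else 0) = 1 ⊗ₖ Ms := by
    ext ⟨i, a⟩ ⟨j, b⟩
    simp [one_apply]
  rw [hkron, det_kronecker, det_one, one_pow, one_mul]
  exact hMs.pow _

theorem posDef_blocks [CommRing R] [PartialOrder R] [StarRing R] [IsOrderedCancelAddMonoid R]
    {B : ι → Matrix κ κ R} (hB : ∀ i, (B i).PosDef) :
    (of fun p q : ι × κ => if p.1 = q.1 then B p.1 p.2 q.2 else 0).PosDef := by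
  have hswap : (of fun p q : ι × κ => if p.1 = q.1 then B p.1 p.2 q.2 else 0) =
      (blockDiagonal B).submatrix Prod.swap Prod.swap := by
    ext ⟨i, a⟩ ⟨j, b⟩
    simp [blockDiagonal_apply]
  rw [hswap]
  exact (posDef_blockDiagonal hB).submatrix Prod.swap_injective

end Blocks

theorem posSemidef_mul_mul_transpose_mul_mul {ι κ R : Type*} [Fintype ι] [Fintype κ] [CommRing R]
    [PartialOrder R] [StarRing R] [TrivialStar R] {Z : Matrix ι ι R} (hZ : Z.IsSymm)
    (E : Matrix ι κ R) {Ms : Matrix κ κ R} (hMs : Ms.PosSemidef) :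
    (Z * E * Ms * Eᵀ * Z).PosSemidef := by
  have h : Z * E * Ms * Eᵀ * Z = Z * E * Ms * (Z * E)ᴴ := by
    rw [conjTranspose_eq_transpose_of_trivial, transpose_mul, hZ.eq, Matrix.mul_assoc _ Eᵀ]
  rw [h]
  exact hMs.mul_mul_conjTranspose_same (Z * E)

end Matrix

theorem SLR_matching_general {N n : ℕ}
    (ζ : Fin N → ℝ) (hζ : ∀ j, 0 < ζ j) (hsum : ∑ j, ζ j = 1)
    (Ablk : Fin N → Matrix (Fin n) (Fin n) ℝ) (hA : ∀ j, (Ablk j).PosDef)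
    (Ms : Matrix (Fin n) (Fin n) ℝ) (hMs : Ms.PosDef)
    (β γ : ℝ) (hγ : 0 ≤ γ) :
    let A : Matrix (Fin N × Fin n) (Fin N × Fin n) ℝ :=
      Matrix.of fun p q => if p.1 = q.1 then ζ p.1 * Ablk p.1 p.2 q.2 else 0
    let Z : Matrix (Fin N × Fin n) (Fin N × Fin n) ℝ := Matrix.diagonal fun p => ζ p.1
    let M : Matrix (Fin N × Fin n) (Fin N × Fin n) ℝ :=
      Matrix.of fun p q => if p.1 = q.1 then Ms p.2 q.2 else 0
    let E : Matrix (Fin N × Fin n) (Fin n) ℝ :=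
      Matrix.of fun p b => if p.2 = b then (1 : ℝ) else 0
    let Mγ : Matrix (Fin N × Fin n) (Fin N × Fin n) ℝ :=
      M * ((1 + γ) • Z - γ • (Z * (E * Eᵀ) * Z))
    let S : Matrix (Fin N × Fin n) (Fin N × Fin n) ℝ :=
      A * Mγ⁻¹ * A + (1 / β) • (Z * E * Ms * Eᵀ * Z)
    let SLR : Matrix (Fin N × Fin n) (Fin N × Fin n) ℝ :=
      (A + (1 / Real.sqrt β) • (Z * E * Ms * Eᵀ * Z)) * Mγ⁻¹ *
        (A + (1 / Real.sqrt β) • (Z * E * Ms * Eᵀ * Z))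
    (∀ v : Fin N × Fin n → ℝ,
      (Eᵀ * Z) *ᵥ v = 0 → (Eᵀ * A) *ᵥ v = 0 → S *ᵥ v = SLR *ᵥ v) ∧
    (N - 2) * n ≤ Module.finrank ℝ (LinearMap.ker (SLR⁻¹ * S - 1).mulVecLin) := by
  intro A Z M E Mγ S SLR
  have hZ : IsUnit Z.det := isUnit_iff_ne_zero.mpr <| by
    simp [Z, det_diagonal, Finset.prod_ne_zero_iff, (hζ _).ne']
  have hE : Eᵀ * Z * E = 1 := transpose_stackedOne_mul_diagonal_mul_stackedOne hsum
  have hW := isUnit_det_weight hZ hE (by positivity : 1 + γ ≠ 0)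
  have hM : IsUnit M.det := isUnit_det_blocks ((isUnit_iff_isUnit_det _).mp hMs.isUnit)
  have hMγ : IsUnit Mγ.det := by simpa only [Mγ, det_mul] using hM.mul hW
  have hLMγ : Z * E * Ms * Eᵀ * Z * Mγ⁻¹ = Z * (E * Eᵀ) :=
    lowRank_mul_inv hM hW (transpose_stackedOne_mul_blocks Ms) (transpose_mul_weight hE γ)
  have hmatch : ∀ v, (Eᵀ * Z) *ᵥ v = 0 → (Eᵀ * A) *ᵥ v = 0 → S *ᵥ v = SLR *ᵥ v :=
    fun v hZv hAv => (add_smul_mul_mul_add_smul_mulVec hLMγ _ _ hZv hAv).symm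
  have hB : (A + (1 / Real.sqrt β) • (Z * E * Ms * Eᵀ * Z)).PosDef :=
    (posDef_blocks fun j => (hA j).smul (hζ j)).add_posSemidef
      ((posSemidef_mul_mul_transpose_mul_mul (isSymm_diagonal _) E hMs.posSemidef).smul
        (by positivity))
  have hSLR : IsUnit SLR.det := by
    have hB' := (isUnit_iff_isUnit_det _).mp hB.isUnit
    simpa only [SLR, det_mul] using (hB'.mul (isUnit_nonsing_inv_det Mγ hMγ)).mul hB'
  refine ⟨hmatch, ?_⟩
  simpa [Nat.sub_mul, two_mul] using card_sub_le_finrank_ker_inv_mul_sub_one _ _ hSLR hmatch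

/-- Vectors in `ℋ ∩ 𝒦` satisfy `S v = S_LR v`; hence `1` is an eigenvalue of
`S_LR⁻¹ S` with geometric multiplicity at least `(N−2)n`. -/
theorem SLR_matching {N n : ℕ} (hN : 2 ≤ N)
    (ζ : Fin N → ℝ) (hζ : ∀ j, 0 < ζ j) (hsum : ∑ j, ζ j = 1)
    (Ablk : Fin N → Matrix (Fin n) (Fin n) ℝ) (hA : ∀ j, (Ablk j).PosDef)
    (Ms : Matrix (Fin n) (Fin n) ℝ) (hMs : Ms.PosDef)
    (β γ : ℝ) (hβ : 0 < β) (hγ : 0 ≤ γ) :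
    let A : Matrix (Fin N × Fin n) (Fin N × Fin n) ℝ :=
      Matrix.of fun p q => if p.1 = q.1 then ζ p.1 * Ablk p.1 p.2 q.2 else 0
    let Z : Matrix (Fin N × Fin n) (Fin N × Fin n) ℝ := Matrix.diagonal fun p => ζ p.1
    let M : Matrix (Fin N × Fin n) (Fin N × Fin n) ℝ :=
      Matrix.of fun p q => if p.1 = q.1 then Ms p.2 q.2 else 0
    let E : Matrix (Fin N × Fin n) (Fin n) ℝ :=
      Matrix.of fun p b => if p.2 = b then (1 : ℝ) else 0
    let Mγ : Matrix (Fin N × Fin n) (Fin N × Fin n) ℝ :=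
      M * ((1 + γ) • Z - γ • (Z * (E * Eᵀ) * Z))
    let S : Matrix (Fin N × Fin n) (Fin N × Fin n) ℝ :=
      A * Mγ⁻¹ * A + (1 / β) • (Z * E * Ms * Eᵀ * Z)
    let SLR : Matrix (Fin N × Fin n) (Fin N × Fin n) ℝ :=
      (A + (1 / Real.sqrt β) • (Z * E * Ms * Eᵀ * Z)) * Mγ⁻¹ *
        (A + (1 / Real.sqrt β) • (Z * E * Ms * Eᵀ * Z))
    (∀ v : Fin N × Fin n → ℝ,
      (Eᵀ * Z) *ᵥ v = 0 → (Eᵀ * A) *ᵥ v = 0 → S *ᵥ v = SLR *ᵥ v) ∧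
    (N - 2) * n ≤ Module.finrank ℝ (LinearMap.ker (SLR⁻¹ * S - 1).mulVecLin) :=
  SLR_matching_general ζ hζ hsum Ablk hA Ms hMs β γ hγ
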